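/- arXiv:2508.02501 — 4 statements merged into one kernel-verified Lean document; each statement's English description precedes it below -/
import Mathlib

section
/- Let G be a group, d a pseudometric on G, and ν : G → ℝ a quasi-morphism with defect D(ν). Let λ > 0 and suppose ν is λ-Lipschitz with respect to d, i.e. |ν(g) − ν(g')| ≤ λ·d(g, g') for all g, g' ∈ G. Let H ≤ G be a subgroup on which ν vanishes identically. Then for all g, g' ∈ G the induced pseudodistance between the cosets gH and g'H satisfies (1/λ)·|ν(g) − ν(g')| − 2·D(ν)/λ ≤ inf { d(g·h, g'·h') : h, h' ∈ H }. -/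
section QuasiMorphism

variable {G : Type*} [Group G] {ν : G → ℝ} {D : ℝ}

theorem abs_map_mul_sub_le_of_map_eq_zero (hD : ∀ a b : G, |ν (a * b) - ν a - ν b| ≤ D)
    (a : G) {b : G} (hb : ν b = 0) : |ν (a * b) - ν a| ≤ D := by
  simpa [hb] using hD a b

theorem abs_sub_le_abs_mul_sub_mul_add_two_mul
    (hD : ∀ a b : G, |ν (a * b) - ν a - ν b| ≤ D) (g g' : G) {h h' : G}
    (hh : ν h = 0) (hh' : ν h' = 0) :
    |ν g - ν g'| ≤ |ν (g * h) - ν (g' * h')| + 2 * D := by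
  calc |ν g - ν g'|
      = |(ν (g * h) - ν (g' * h')) + (ν g - ν (g * h)) + (ν (g' * h') - ν g')| := by
        congr 1; ring
    _ ≤ |ν (g * h) - ν (g' * h')| + |ν g - ν (g * h)| + |ν (g' * h') - ν g'| :=
        abs_add_three _ _ _
    _ ≤ |ν (g * h) - ν (g' * h')| + D + D := by
        rw [abs_sub_comm (ν g)]
        gcongr
        · exact abs_map_mul_sub_le_of_map_eq_zero hD g hh
        · exact abs_map_mul_sub_le_of_map_eq_zero hD g' hh'
    _ = |ν (g * h) - ν (g' * h')| + 2 * D := by ring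

end QuasiMorphism

theorem stmt_1_general {G : Type*} [Group G] (d : G → G → ℝ)
    (ν : G → ℝ) (D : ℝ)
    (hD : ∀ a b : G, |ν (a * b) - ν a - ν b| ≤ D)
    (lam : ℝ) (hlam : 0 < lam)
    (hLip : ∀ g g' : G, |ν g - ν g'| ≤ lam * d g g')
    (H : Subgroup G) (hH : ∀ h ∈ H, ν h = 0) :
    ∀ g g' : G,
      (1 / lam) * |ν g - ν g'| - 2 * D / lam ≤
        sInf {r : ℝ | ∃ h ∈ H, ∃ h' ∈ H, r = d (g * h) (g' * h')} := by
  intro g g'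
  refine le_csInf ⟨_, 1, H.one_mem, 1, H.one_mem, rfl⟩ ?_
  rintro _ ⟨h, hh, h', hh', rfl⟩
  have key := abs_sub_le_abs_mul_sub_mul_add_two_mul hD g g' (hH h hh) (hH h' hh')
  have lip := hLip (g * h) (g' * h')
  rw [one_div_mul_eq_div, ← sub_div, div_le_iff₀ hlam]
  linarith

/-- Let `G` be a group, `d` a pseudometric on `G`, and `ν : G → ℝ` a
quasi-morphism with defect `D`. Let `λ > 0` and suppose `ν` is `λ`-Lipschitz with
respect to `d`. Let `H ≤ G` be a subgroup on which `ν` vanishes identically. Then for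
all `g, g' ∈ G` the induced pseudodistance between the cosets `gH` and `g'H` satisfies
`(1/λ)·|ν(g) − ν(g')| − 2·D/λ ≤ inf { d(g·h, g'·h') : h, h' ∈ H }`. -/
theorem stmt_1 {G : Type*} [Group G] (d : G → G → ℝ)
    (hd_nonneg : ∀ a b : G, 0 ≤ d a b)
    (hd_refl : ∀ a : G, d a a = 0)
    (hd_symm : ∀ a b : G, d a b = d b a)
    (hd_tri : ∀ a b c : G, d a c ≤ d a b + d b c)
    (ν : G → ℝ) (D : ℝ)
    (hD : ∀ a b : G, |ν (a * b) - ν a - ν b| ≤ D)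
    (lam : ℝ) (hlam : 0 < lam)
    (hLip : ∀ g g' : G, |ν g - ν g'| ≤ lam * d g g')
    (H : Subgroup G) (hH : ∀ h ∈ H, ν h = 0) :
    ∀ g g' : G,
      (1 / lam) * |ν g - ν g'| - 2 * D / lam ≤
        sInf {r : ℝ | ∃ h ∈ H, ∃ h' ∈ H, r = d (g * h) (g' * h')} :=
  stmt_1_general d ν D hD lam hlam hLip H hH
end

section
/- Let G be a group, d a biinvariant pseudometric on G, λ > 0, and ν : G → ℝ a function which is λ-Lipschitz with respect to d, i.e. |ν(g) − ν(g')| ≤ λ·d(g, g') for all g, g' ∈ G. Suppose ν_∞ : G → ℝ is a function such that for every a ∈ G the sequence ν(aⁿ)/n converges to ν_∞(a) as n → ∞. Then ν_∞ is also λ-Lipschitz with respect to d, i.e. |ν_∞(a) − ν_∞(b)| ≤ λ·d(a, b) for all a, b ∈ G. -/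
/-!
Biinvariance gives `d (aⁿ) (bⁿ) ≤ n * d a b`: move one factor at a time, from `a * aⁿ` to
`b * aⁿ` (right invariance) and then to `b * bⁿ` (left invariance). Hence
`|ν (aⁿ) / n - ν (bⁿ) / n| ≤ λ * d a b` for every `n ≥ 1`, and the bound passes to the limit.
-/

open Filter

theorem pow_pow_le_nat_mul_of_biinvariant {G : Type*} [Monoid G] (d : G → G → ℝ)
    (hd_refl : ∀ a : G, d a a = 0)
    (hd_tri : ∀ a b c : G, d a c ≤ d a b + d b c)
    (hd_left : ∀ x a b : G, d (x * a) (x * b) = d a b)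
    (hd_right : ∀ x a b : G, d (a * x) (b * x) = d a b)
    (a b : G) (n : ℕ) : d (a ^ n) (b ^ n) ≤ n * d a b := by
  induction n with
  | zero => simp [hd_refl]
  | succ n ih =>
    calc d (a ^ (n + 1)) (b ^ (n + 1))
        ≤ d (a * a ^ n) (b * a ^ n) + d (b * a ^ n) (b * b ^ n) := by
          rw [pow_succ', pow_succ']
          exact hd_tri _ _ _
      _ = d a b + d (a ^ n) (b ^ n) := by rw [hd_right, hd_left]
      _ ≤ (n + 1 : ℕ) * d a b := by push_cast; linarith

theorem stmt_4_general {G : Type*} [Group G] (d : G → G → ℝ)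
    (hd_refl : ∀ a : G, d a a = 0)
    (hd_tri : ∀ a b c : G, d a c ≤ d a b + d b c)
    (hd_left : ∀ x a b : G, d (x * a) (x * b) = d a b)
    (hd_right : ∀ x a b : G, d (a * x) (b * x) = d a b)
    (lam : ℝ) (hlam : 0 < lam)
    (ν : G → ℝ)
    (hLip : ∀ g g' : G, |ν g - ν g'| ≤ lam * d g g')
    (νinf : G → ℝ)
    (hνinf : ∀ a : G,
      Tendsto (fun n : ℕ => ν (a ^ n) / (n : ℝ)) atTop (nhds (νinf a))) :
    ∀ a b : G, |νinf a - νinf b| ≤ lam * d a b := by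
  intro a b
  refine le_of_tendsto ((hνinf a).sub (hνinf b)).abs ?_
  filter_upwards [eventually_gt_atTop 0] with n hn
  have hn_pos : (0 : ℝ) < n := Nat.cast_pos.mpr hn
  rw [← sub_div, abs_div, abs_of_pos hn_pos, div_le_iff₀ hn_pos]
  calc |ν (a ^ n) - ν (b ^ n)| ≤ lam * d (a ^ n) (b ^ n) := hLip _ _
    _ ≤ lam * (n * d a b) := mul_le_mul_of_nonneg_left
        (pow_pow_le_nat_mul_of_biinvariant d hd_refl hd_tri hd_left hd_right a b n) hlam.le
    _ = lam * d a b * n := by ring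

/-- Let `G` be a group, `d` a biinvariant pseudometric on `G`, `λ > 0`,
and `ν : G → ℝ` a function which is `λ`-Lipschitz with respect to `d`. Suppose
`ν∞ : G → ℝ` is a function such that for every `a ∈ G` the sequence `ν(aⁿ)/n`
converges to `ν∞(a)` as `n → ∞`. Then `ν∞` is also `λ`-Lipschitz with respect to
`d`. -/
theorem stmt_4 {G : Type*} [Group G] (d : G → G → ℝ)
    (hd_nonneg : ∀ a b : G, 0 ≤ d a b)
    (hd_refl : ∀ a : G, d a a = 0)
    (hd_symm : ∀ a b : G, d a b = d b a)
    (hd_tri : ∀ a b c : G, d a c ≤ d a b + d b c)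
    (hd_left : ∀ x a b : G, d (x * a) (x * b) = d a b)
    (hd_right : ∀ x a b : G, d (a * x) (b * x) = d a b)
    (lam : ℝ) (hlam : 0 < lam)
    (ν : G → ℝ)
    (hLip : ∀ g g' : G, |ν g - ν g'| ≤ lam * d g g')
    (νinf : G → ℝ)
    (hνinf : ∀ a : G,
      Tendsto (fun n : ℕ => ν (a ^ n) / (n : ℝ)) atTop (nhds (νinf a))) :
    ∀ a b : G, |νinf a - νinf b| ≤ lam * d a b :=
  stmt_4_general d hd_refl hd_tri hd_left hd_right lam hlam ν hLip νinf hνinf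
end

section
/- Let G be a group with identity element e, and let c : G → ℝ be a quasi-morphism with defect D(c). Let ℓ : G → ℝ be a function satisfying ℓ(g) ≤ c(g) for all g ∈ G, and the positivity property ℓ(g) + ℓ(g⁻¹) ≥ 0 for all g ∈ G. Then for every g ∈ G one has c(g) − c(e) − D(c) ≤ ℓ(g) ≤ c(g). In particular, the function c − ℓ is bounded on G. -/
/-!
Applying the defect bound to the pair `(g, g⁻¹)` gives `c g + c g⁻¹ ≤ c 1 + D`. Combined with
`ℓ g⁻¹ ≤ c g⁻¹` and positivity `-ℓ g⁻¹ ≤ ℓ g`, this yields `c g - c 1 - D ≤ ℓ g`, so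
`0 ≤ c g - ℓ g ≤ c 1 + D` for every `g`.
-/

section QuasiMorphism

variable {G : Type*} [Group G] {c : G → ℝ} {D : ℝ}

theorem add_apply_inv_le_of_defect_le (hD : ∀ a b : G, |c (a * b) - c a - c b| ≤ D) (g : G) :
    c g + c g⁻¹ ≤ c 1 + D := by
  have h := (abs_le.1 (hD g g⁻¹)).1
  rw [mul_inv_cancel] at h
  linarith

theorem sub_apply_one_sub_defect_le_of_le_of_add_inv_nonneg
    (hD : ∀ a b : G, |c (a * b) - c a - c b| ≤ D) {ℓ : G → ℝ} (hle : ∀ g, ℓ g ≤ c g)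
    (hpos : ∀ g, ℓ g + ℓ g⁻¹ ≥ 0) (g : G) :
    c g - c 1 - D ≤ ℓ g := by
  linarith [add_apply_inv_le_of_defect_le hD g, hle g⁻¹, hpos g]

end QuasiMorphism

/-- Let `G` be a group with identity `1`, and let `c : G → ℝ` be a
quasi-morphism with defect `D`. Let `ℓ : G → ℝ` be a function satisfying `ℓ(g) ≤ c(g)`
for all `g ∈ G`, and the positivity property `ℓ(g) + ℓ(g⁻¹) ≥ 0` for all `g ∈ G`. Then
for every `g ∈ G` one has `c(g) − c(1) − D ≤ ℓ(g) ≤ c(g)`. In particular, the function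
`c − ℓ` is bounded on `G`. -/
theorem stmt_6 {G : Type*} [Group G] (c : G → ℝ) (D : ℝ)
    (hD : ∀ a b : G, |c (a * b) - c a - c b| ≤ D)
    (ℓ : G → ℝ)
    (hle : ∀ g : G, ℓ g ≤ c g)
    (hpos : ∀ g : G, ℓ g + ℓ g⁻¹ ≥ 0) :
    (∀ g : G, c g - c 1 - D ≤ ℓ g ∧ ℓ g ≤ c g) ∧
      ∃ B : ℝ, ∀ g : G, |c g - ℓ g| ≤ B := by
  have hlower := sub_apply_one_sub_defect_le_of_le_of_add_inv_nonneg hD hle hpos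
  refine ⟨fun g => ⟨hlower g, hle g⟩, c 1 + D, fun g => ?_⟩
  rw [abs_of_nonneg (sub_nonneg.2 (hle g))]
  linarith [hlower g]
end

section
/- Let G be a group with identity e, d a biinvariant pseudometric on G, H ≤ G a subgroup, and ν : G → ℝ a quasi-morphism with defect D(ν) which is 2-Lipschitz with respect to d (i.e. |ν(g) − ν(g')| ≤ 2·d(g, g') for all g, g' ∈ G) and which vanishes identically on H. Let φ : ℝ → G be a group homomorphism from the additive group of reals such that ν(φ(t)) = t and d(e, φ(t)) ≤ |t| for all t ∈ ℝ. Then for all s, t ∈ ℝ the induced pseudodistance between the cosets φ(s)H and φ(t)H satisfies (1/2)·|s − t| − D(ν) ≤ inf { d(φ(s)·h, φ(t)·h') : h, h' ∈ H } ≤ |s − t|. In particular, the homogeneous space G/H with the induced pseudometric contains a quasi-isometric copy of ℝ and has infinite diameter. -/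
/-!
A quasi-morphism `ν` vanishing on `H` is constant up to the defect `D` on each coset `gH`,
and being `2`-Lipschitz it separates cosets: `d(gh, g'h') ≥ ½|ν g - ν g'| - D`. Along the
one-parameter subgroup `φ` we have `ν (φ t) = t`, which gives the lower bound; the upper
bound is `d(φ s, φ t) = d(1, φ (t - s)) ≤ |t - s|` by left invariance.
-/

section CosetDist

variable {G : Type*} [Group G] (d : G → G → ℝ) (H : Subgroup G)

noncomputable def cosetDist (g g' : G) : ℝ :=
  sInf {r : ℝ | ∃ h ∈ H, ∃ h' ∈ H, r = d (g * h) (g' * h')}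

variable {d H}

theorem le_cosetDist {g g' : G} {c : ℝ} (hc : ∀ h ∈ H, ∀ h' ∈ H, c ≤ d (g * h) (g' * h')) :
    c ≤ cosetDist d H g g' :=
  le_csInf ⟨_, 1, H.one_mem, 1, H.one_mem, rfl⟩ fun _ ⟨h, hh, h', hh', hr⟩ => hr ▸ hc h hh h' hh'

theorem cosetDist_le {g g' : G} {c : ℝ} (hc : ∀ h ∈ H, ∀ h' ∈ H, c ≤ d (g * h) (g' * h')) :
    cosetDist d H g g' ≤ d g g' := by
  refine csInf_le ⟨c, fun _ ⟨h, hh, h', hh', hr⟩ => hr ▸ hc h hh h' hh'⟩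
    ⟨1, H.one_mem, 1, H.one_mem, ?_⟩
  simp only [mul_one]

end CosetDist

section QuasiMorphism

variable {G : Type*} [Group G] {ν : G → ℝ} {D : ℝ} {H : Subgroup G}

theorem abs_map_mul_sub_le_of_mem (hD : ∀ a b : G, |ν (a * b) - ν a - ν b| ≤ D)
    (hH : ∀ h ∈ H, ν h = 0) (g : G) {h : G} (hh : h ∈ H) : |ν (g * h) - ν g| ≤ D := by
  simpa only [hH h hh, sub_zero] using hD g h

theorem half_abs_sub_sub_le_of_lipschitz {d : G → G → ℝ}
    (hD : ∀ a b : G, |ν (a * b) - ν a - ν b| ≤ D)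
    (hLip : ∀ g g' : G, |ν g - ν g'| ≤ 2 * d g g') (hH : ∀ h ∈ H, ν h = 0)
    (g g' : G) {h h' : G} (hh : h ∈ H) (hh' : h' ∈ H) :
    1 / 2 * |ν g - ν g'| - D ≤ d (g * h) (g' * h') := by
  have hg := abs_map_mul_sub_le_of_mem hD hH g hh
  have hg' := abs_map_mul_sub_le_of_mem hD hH g' hh'
  have hsplit : |ν g - ν g'| ≤ |ν (g * h) - ν g| + |ν (g * h) - ν (g' * h')|
      + |ν (g' * h') - ν g'| := by
    calc |ν g - ν g'|
        = |-(ν (g * h) - ν g) + (ν (g * h) - ν (g' * h')) + (ν (g' * h') - ν g')| := by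
          ring_nf
      _ ≤ _ := (abs_add_three _ _ _).trans_eq (by rw [abs_neg])
  linarith [hLip (g * h) (g' * h')]

end QuasiMorphism

theorem dist_map_le_abs_sub {G : Type*} [Group G] {d : G → G → ℝ}
    (hd_left : ∀ x a b : G, d (x * a) (x * b) = d a b) {φ : ℝ → G}
    (hφ : ∀ s t : ℝ, φ (s + t) = φ s * φ t) (hφd : ∀ t : ℝ, d 1 (φ t) ≤ |t|) (s t : ℝ) :
    d (φ s) (φ t) ≤ |s - t| := by
  have h := hd_left (φ s) 1 (φ (t - s))
  rw [mul_one, ← hφ, add_sub_cancel] at h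
  rw [h, abs_sub_comm]
  exact hφd (t - s)

theorem stmt_9_general {G : Type*} [Group G] (d : G → G → ℝ)
    (hd_left : ∀ x a b : G, d (x * a) (x * b) = d a b)
    (H : Subgroup G)
    (ν : G → ℝ) (D : ℝ)
    (hD : ∀ a b : G, |ν (a * b) - ν a - ν b| ≤ D)
    (hLip : ∀ g g' : G, |ν g - ν g'| ≤ 2 * d g g')
    (hH : ∀ h ∈ H, ν h = 0)
    (φ : ℝ → G)
    (hφ : ∀ s t : ℝ, φ (s + t) = φ s * φ t)
    (hν : ∀ t : ℝ, ν (φ t) = t)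
    (hφd : ∀ t : ℝ, d 1 (φ t) ≤ |t|) :
    (∀ s t : ℝ,
        (1 / 2) * |s - t| - D ≤
            sInf {r : ℝ | ∃ h ∈ H, ∃ h' ∈ H, r = d (φ s * h) (φ t * h')} ∧
          sInf {r : ℝ | ∃ h ∈ H, ∃ h' ∈ H, r = d (φ s * h) (φ t * h')} ≤ |s - t|) ∧
      ∀ R : ℝ, ∃ g g' : G,
        R ≤ sInf {r : ℝ | ∃ h ∈ H, ∃ h' ∈ H, r = d (g * h) (g' * h')} := by
  have hsep : ∀ s t, ∀ h ∈ H, ∀ h' ∈ H, 1 / 2 * |s - t| - D ≤ d (φ s * h) (φ t * h') :=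
    fun s t _ hh _ hh' => by
      simpa only [hν] using half_abs_sub_sub_le_of_lipschitz hD hLip hH (φ s) (φ t) hh hh'
  have hbounds : ∀ s t : ℝ, 1 / 2 * |s - t| - D ≤ cosetDist d H (φ s) (φ t) ∧
      cosetDist d H (φ s) (φ t) ≤ |s - t| := fun s t =>
    ⟨le_cosetDist (hsep s t),
      (cosetDist_le (hsep s t)).trans (dist_map_le_abs_sub hd_left hφ hφd s t)⟩
  refine ⟨hbounds, fun R => ⟨φ (2 * (R + D)), φ 0, ?_⟩⟩
  have hlow := (hbounds (2 * (R + D)) 0).1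
  rw [sub_zero] at hlow
  change R ≤ cosetDist d H _ _
  linarith [le_abs_self (2 * (R + D))]

/-- Let `G` be a group with identity `1`, `d` a biinvariant pseudometric
on `G`, `H ≤ G` a subgroup, and `ν : G → ℝ` a quasi-morphism with defect `D` which is
`2`-Lipschitz with respect to `d` and which vanishes identically on `H`. Let
`φ : ℝ → G` be a group homomorphism from the additive group of reals such that
`ν(φ(t)) = t` and `d(1, φ(t)) ≤ |t|` for all `t ∈ ℝ`. Then for all `s, t ∈ ℝ` the
induced pseudodistance between the cosets `φ(s)H` and `φ(t)H` satisfies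
`(1/2)·|s − t| − D ≤ inf { d(φ(s)·h, φ(t)·h') : h, h' ∈ H } ≤ |s − t|`. In
particular, the homogeneous space `G/H` with the induced pseudometric contains a
quasi-isometric copy of `ℝ` and has infinite diameter. -/
theorem stmt_9 {G : Type*} [Group G] (d : G → G → ℝ)
    (hd_nonneg : ∀ a b : G, 0 ≤ d a b)
    (hd_refl : ∀ a : G, d a a = 0)
    (hd_symm : ∀ a b : G, d a b = d b a)
    (hd_tri : ∀ a b c : G, d a c ≤ d a b + d b c)
    (hd_left : ∀ x a b : G, d (x * a) (x * b) = d a b)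
    (hd_right : ∀ x a b : G, d (a * x) (b * x) = d a b)
    (H : Subgroup G)
    (ν : G → ℝ) (D : ℝ)
    (hD : ∀ a b : G, |ν (a * b) - ν a - ν b| ≤ D)
    (hLip : ∀ g g' : G, |ν g - ν g'| ≤ 2 * d g g')
    (hH : ∀ h ∈ H, ν h = 0)
    (φ : ℝ → G)
    (hφ : ∀ s t : ℝ, φ (s + t) = φ s * φ t)
    (hν : ∀ t : ℝ, ν (φ t) = t)
    (hφd : ∀ t : ℝ, d 1 (φ t) ≤ |t|) :
    (∀ s t : ℝ,
        (1 / 2) * |s - t| - D ≤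
            sInf {r : ℝ | ∃ h ∈ H, ∃ h' ∈ H, r = d (φ s * h) (φ t * h')} ∧
          sInf {r : ℝ | ∃ h ∈ H, ∃ h' ∈ H, r = d (φ s * h) (φ t * h')} ≤ |s - t|) ∧
      ∀ R : ℝ, ∃ g g' : G,
        R ≤ sInf {r : ℝ | ∃ h ∈ H, ∃ h' ∈ H, r = d (g * h) (g' * h')} :=
  stmt_9_general d hd_left H ν D hD hLip hH φ hφ hν hφd
end
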